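/- arXiv:1309.2502 — 4 statements merged into one kernel-verified Lean document; each statement's English description precedes it below -/
import Mathlib

section
/- Proposition 1 (the Gaussian SDP relaxation is a rank-D relaxation). Assume r(i,j) > 0 for all (i,j) ∈ E and v(i,k) > 0 for all (i,k) ∈ Ea. Let F be the set of tuples (X, Y, δ, d, ε, e) satisfying the edge constraints, the anchor constraints, the global PSD constraint, and Y.PosSemidef. If a tuple (X*, Y*, δ*, d*, ε*, e*) ∈ F minimizes f_GN over F, then δ*(i,j) = d*(i,j)^2 for every (i,j) ∈ E and ε*(i,k) = e*(i,k)^2 for every (i,k) ∈ Ea. -/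
/-!
The cost is affine in each `d(i,j)` with slope `-2 σ(i,j)⁻² r(i,j) < 0`, and `d(i,j)` enters
the constraints only through `0 ≤ d(i,j)` and `d(i,j)² ≤ δ(i,j)`. Raising `d(i,j)` to
`√δ(i,j)` therefore keeps the point feasible and does not increase the cost, so a minimizer
already has `d(i,j) ≥ √δ(i,j)`, i.e. `δ(i,j) = d(i,j)²`. The anchor variables `e(i,k)` behave
in the same way.
-/

open Matrix
open scoped RealInnerProductSpace

/-- The `i`-th column of the position matrix `X`, viewed as a point of
`EuclideanSpace ℝ (Fin D)`. -/
def col {D n : ℕ} (X : Matrix (Fin D) (Fin n) ℝ) (i : Fin n) :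
    EuclideanSpace ℝ (Fin D) :=
  WithLp.toLp 2 (fun t => X t i)

/-- Edge constraints (5b): for every `(i,j) ∈ E`,
`Yᵢᵢ + Yⱼⱼ − 2Yᵢⱼ = δᵢⱼ`, `δᵢⱼ ≥ 0`, `dᵢⱼ ≥ 0`, and `dᵢⱼ² ≤ δᵢⱼ`
(Schur form of the LMI `[[1, d],[d, δ]] ⪰ 0`). -/
def EdgeConstraints {n : ℕ} (E : Finset (Fin n × Fin n))
    (Y : Matrix (Fin n) (Fin n) ℝ) (δ d : Fin n × Fin n → ℝ) : Prop :=
  ∀ p ∈ E, Y p.1 p.1 + Y p.2 p.2 - 2 * Y p.1 p.2 = δ p ∧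
    0 ≤ δ p ∧ 0 ≤ d p ∧ d p ^ 2 ≤ δ p

/-- Anchor constraints (5c): for every `(i,k) ∈ Ea`,
`Yᵢᵢ − 2⟪xᵢ, aₖ⟫ + ‖aₖ‖² = εᵢₖ`, `εᵢₖ ≥ 0`, `eᵢₖ ≥ 0`, and `eᵢₖ² ≤ εᵢₖ`. -/
def AnchorConstraints {D n m : ℕ} (Ea : Finset (Fin n × Fin m))
    (a : Fin m → EuclideanSpace ℝ (Fin D))
    (X : Matrix (Fin D) (Fin n) ℝ) (Y : Matrix (Fin n) (Fin n) ℝ)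
    (ε e : Fin n × Fin m → ℝ) : Prop :=
  ∀ q ∈ Ea, Y q.1 q.1 - 2 * ⟪_root_.col X q.1, a q.2⟫ + ‖a q.2‖ ^ 2 = ε q ∧
    0 ≤ ε q ∧ 0 ≤ e q ∧ e q ^ 2 ≤ ε q

/-- The Gaussian ML cost `f_GN` of the relaxation (7). -/
noncomputable def fGN {n m : ℕ} (E : Finset (Fin n × Fin n))
    (Ea : Finset (Fin n × Fin m))
    (r : Fin n × Fin n → ℝ) (v : Fin n × Fin m → ℝ)
    (σ : Fin n × Fin n → ℝ) (σa : Fin n × Fin m → ℝ)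
    (δ d : Fin n × Fin n → ℝ) (ε e : Fin n × Fin m → ℝ) : ℝ :=
  (∑ p ∈ E, (σ p)⁻¹ ^ 2 * (δ p - 2 * d p * r p + r p ^ 2)) +
    ∑ q ∈ Ea, (σa q)⁻¹ ^ 2 * (ε q - 2 * e q * v q + v q ^ 2)

open Function

section GaussianCost

variable {ι : Type*} [DecidableEq ι] (s : Finset ι) (w r δ d : ι → ℝ)

noncomputable def gaussianCost : ℝ :=
  ∑ q ∈ s, w q * (δ q - 2 * d q * r q + r q ^ 2)

theorem gaussianCost_update {p : ι} (hp : p ∈ s) (y : ℝ) :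
    gaussianCost s w r δ (update d p y) = gaussianCost s w r δ d + 2 * w p * r p * (d p - y) := by
  have hsplit : ∀ f : ι → ℝ, ∑ q ∈ s, f q = f p + ∑ q ∈ s.erase p, f q := fun f =>
    (Finset.add_sum_erase s f hp).symm
  unfold gaussianCost
  rw [hsplit, hsplit (fun q => w q * (δ q - 2 * d q * r q + r q ^ 2)), update_self,
    Finset.sum_congr rfl fun q hq => by rw [update_of_ne (Finset.ne_of_mem_erase hq)]]
  ring

theorem eq_sq_of_gaussianCost_le_update_sqrt {p : ι} (hp : p ∈ s) (hw : 0 < w p) (hr : 0 < r p)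
    (hd : 0 ≤ d p) (hdδ : d p ^ 2 ≤ δ p)
    (hmin : gaussianCost s w r δ d ≤ gaussianCost s w r δ (update d p √(δ p))) :
    δ p = d p ^ 2 := by
  rw [gaussianCost_update s w r δ d hp] at hmin
  have hsqrt : √(δ p) ≤ d p := sub_nonneg.mp <|
    (mul_nonneg_iff_of_pos_left (c := 2 * w p * r p) (by positivity)).mp (by linarith)
  exact le_antisymm ((Real.sqrt_le_left hd).mp hsqrt) hdδ

end GaussianCost

theorem fGN_eq_gaussianCost_add {n m : ℕ} (E : Finset (Fin n × Fin n))
    (Ea : Finset (Fin n × Fin m))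
    (r : Fin n × Fin n → ℝ) (v : Fin n × Fin m → ℝ)
    (σ : Fin n × Fin n → ℝ) (σa : Fin n × Fin m → ℝ)
    (δ d : Fin n × Fin n → ℝ) (ε e : Fin n × Fin m → ℝ) :
    fGN E Ea r v σ σa δ d ε e =
      gaussianCost E (fun p => (σ p)⁻¹ ^ 2) r δ d +
        gaussianCost Ea (fun q => (σa q)⁻¹ ^ 2) v ε e :=
  rfl

theorem EdgeConstraints.update_sqrt {n : ℕ} {E : Finset (Fin n × Fin n)}
    {Y : Matrix (Fin n) (Fin n) ℝ} {δ d : Fin n × Fin n → ℝ} (h : EdgeConstraints E Y δ d)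
    (p : Fin n × Fin n) : EdgeConstraints E Y δ (update d p √(δ p)) := by
  intro q hq
  obtain ⟨hY, hδ, hd, hdδ⟩ := h q hq
  rcases eq_or_ne q p with rfl | hqp
  · simpa [Real.sq_sqrt hδ] using ⟨hY, hδ⟩
  · simpa [update_of_ne hqp] using ⟨hY, hδ, hd, hdδ⟩

theorem AnchorConstraints.update_sqrt {D n m : ℕ} {Ea : Finset (Fin n × Fin m)}
    {a : Fin m → EuclideanSpace ℝ (Fin D)} {X : Matrix (Fin D) (Fin n) ℝ}
    {Y : Matrix (Fin n) (Fin n) ℝ} {ε e : Fin n × Fin m → ℝ}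
    (h : AnchorConstraints Ea a X Y ε e)
    (q : Fin n × Fin m) : AnchorConstraints Ea a X Y ε (update e q √(ε q)) := by
  intro q' hq'
  obtain ⟨hY, hε, he, heε⟩ := h q' hq'
  rcases eq_or_ne q' q with rfl | hq
  · simpa [Real.sq_sqrt hε] using ⟨hY, hε⟩
  · simpa [update_of_ne hq] using ⟨hY, hε, he, heε⟩

/-- Proposition 1: the Gaussian SDP relaxation (7) is a rank-D relaxation.
If a feasible tuple minimizes the Gaussian ML cost `f_GN` over the feasible set
(edge constraints, anchor constraints, global PSD constraint and `Y ⪰ 0`),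
then at optimality `δᵢⱼ = dᵢⱼ²` on `E` and `εᵢₖ = eᵢₖ²` on `Ea`. -/
theorem gaussian_sdp_rankD (D n m : ℕ)
    (E : Finset (Fin n × Fin n)) (Ea : Finset (Fin n × Fin m))
    (a : Fin m → EuclideanSpace ℝ (Fin D))
    (r : Fin n × Fin n → ℝ) (v : Fin n × Fin m → ℝ)
    (σ : Fin n × Fin n → ℝ) (σa : Fin n × Fin m → ℝ)
    (hr : ∀ p ∈ E, 0 < r p) (hv : ∀ q ∈ Ea, 0 < v q)
    (hσ : ∀ p ∈ E, 0 < σ p) (hσa : ∀ q ∈ Ea, 0 < σa q)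
    (X : Matrix (Fin D) (Fin n) ℝ) (Y : Matrix (Fin n) (Fin n) ℝ)
    (δ d : Fin n × Fin n → ℝ) (ε e : Fin n × Fin m → ℝ)
    (hE : EdgeConstraints E Y δ d)
    (hA : AnchorConstraints Ea a X Y ε e)
    (hPSD : (Matrix.fromBlocks (1 : Matrix (Fin D) (Fin D) ℝ) X Xᵀ Y).PosSemidef)
    (hY : Y.PosSemidef)
    (hmin : ∀ (X' : Matrix (Fin D) (Fin n) ℝ) (Y' : Matrix (Fin n) (Fin n) ℝ)
      (δ' d' : Fin n × Fin n → ℝ) (ε' e' : Fin n × Fin m → ℝ),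
      EdgeConstraints E Y' δ' d' → AnchorConstraints Ea a X' Y' ε' e' →
      (Matrix.fromBlocks (1 : Matrix (Fin D) (Fin D) ℝ) X' X'ᵀ Y').PosSemidef →
      Y'.PosSemidef →
      fGN E Ea r v σ σa δ d ε e ≤ fGN E Ea r v σ σa δ' d' ε' e') :
    (∀ p ∈ E, δ p = d p ^ 2) ∧ ∀ q ∈ Ea, ε q = e q ^ 2 := by
  constructor
  · intro p hp
    obtain ⟨-, -, hd, hdδ⟩ := hE p hp
    refine eq_sq_of_gaussianCost_le_update_sqrt E (fun p => (σ p)⁻¹ ^ 2) r δ d hp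
      (pow_pos (inv_pos.mpr (hσ p hp)) 2) (hr p hp) hd hdδ ?_
    have hle := hmin X Y δ _ ε e (hE.update_sqrt p) hA hPSD hY
    rwa [fGN_eq_gaussianCost_add, fGN_eq_gaussianCost_add, add_le_add_iff_right] at hle
  · intro q hq
    obtain ⟨-, -, he, heε⟩ := hA q hq
    refine eq_sq_of_gaussianCost_le_update_sqrt Ea (fun q => (σa q)⁻¹ ^ 2) v ε e hq
      (pow_pos (inv_pos.mpr (hσa q hq)) 2) (hv q hq) he heε ?_
    have hle := hmin X Y δ d ε _ hE (hA.update_sqrt q) hPSD hY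
    rwa [fGN_eq_gaussianCost_add, fGN_eq_gaussianCost_add, add_le_add_iff_left] at hle
end

section
/- Edge-based rank-D property (claim of Section IV for the Gaussian E-ML relaxation). Assume r(i,j) > 0 for all (i,j) ∈ E and v(i,k) > 0 for all (i,k) ∈ Ea. Let F_edge be the set of tuples (X, Y, δ, d, ε, e) satisfying the edge constraints, the anchor constraints, and the edge PSD constraint. If a tuple (X*, Y*, δ*, d*, ε*, e*) ∈ F_edge minimizes f_GN over F_edge, then δ*(i,j) = d*(i,j)^2 for every (i,j) ∈ E and ε*(i,k) = e*(i,k)^2 for every (i,k) ∈ Ea. -/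
open Matrix
open scoped RealInnerProductSpace

/-- Edge PSD constraint (12): for every `(i,j) ∈ E`, the block matrix
`[[I_D, xᵢ, xⱼ],[xᵢᵀ, Yᵢᵢ, Yᵢⱼ],[xⱼᵀ, Yᵢⱼ, Yⱼⱼ]]` is positive semidefinite. -/
def EdgePSD {D n : ℕ} (E : Finset (Fin n × Fin n))
    (X : Matrix (Fin D) (Fin n) ℝ) (Y : Matrix (Fin n) (Fin n) ℝ) : Prop :=
  ∀ p ∈ E, (Matrix.fromBlocks (1 : Matrix (Fin D) (Fin D) ℝ)
      (Matrix.of fun t s => ![X t p.1, X t p.2] s)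
      (Matrix.of fun t s => ![X t p.1, X t p.2] s)ᵀ
      !![Y p.1 p.1, Y p.1 p.2; Y p.1 p.2, Y p.2 p.2]).PosSemidef

/-!
The cost is affine in the lifted distances `d`, `e` with slopes `-2 r / σ²` and `-2 v / σa²`,
which are negative. The constraint `d² ≤ δ` only bounds `d` by `√δ`, and raising `d` to `√δ`
touches no other constraint, so a minimizer must already have `d = √δ`, i.e. `δ = d²`;
likewise `ε = e²`.
-/

open Function

/-- One block of `fGN`: the weighted expansion of `∑ w (√δ - r)²` with `√δ` relaxed to `d`. -/
def rangeResidual {ι : Type*} (S : Finset ι) (w r δ d : ι → ℝ) : ℝ :=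
  ∑ p ∈ S, w p * (δ p - 2 * d p * r p + r p ^ 2)

theorem fGN_eq_rangeResidual_add {n m : ℕ} (E : Finset (Fin n × Fin n))
    (Ea : Finset (Fin n × Fin m)) (r : Fin n × Fin n → ℝ) (v : Fin n × Fin m → ℝ)
    (σ : Fin n × Fin n → ℝ) (σa : Fin n × Fin m → ℝ)
    (δ d : Fin n × Fin n → ℝ) (ε e : Fin n × Fin m → ℝ) :
    fGN E Ea r v σ σa δ d ε e =
      rangeResidual E (fun p => (σ p)⁻¹ ^ 2) r δ d +
        rangeResidual Ea (fun q => (σa q)⁻¹ ^ 2) v ε e :=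
  rfl

theorem rangeResidual_update_lt {ι : Type*} [DecidableEq ι] {S : Finset ι}
    {w r δ d : ι → ℝ} {p : ι} {x : ℝ} (hp : p ∈ S) (hw : 0 < w p) (hr : 0 < r p)
    (hx : d p < x) :
    rangeResidual S w r δ (update d p x) < rangeResidual S w r δ d := by
  unfold rangeResidual
  rw [← Finset.add_sum_erase S _ hp, ← Finset.add_sum_erase S _ hp,
    Finset.sum_congr rfl fun q hq => by rw [update_of_ne (Finset.ne_of_mem_erase hq)],
    update_self]
  have : 0 < w p * r p * (x - d p) := by have := sub_pos.2 hx; positivity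
  linarith

theorem eq_sq_of_rangeResidual_le_update {ι : Type*} [DecidableEq ι] {S : Finset ι}
    {w r δ d : ι → ℝ} {p : ι} (hp : p ∈ S) (hw : 0 < w p) (hr : 0 < r p)
    (hd : 0 ≤ d p) (hle : d p ^ 2 ≤ δ p)
    (hmin : rangeResidual S w r δ d ≤ rangeResidual S w r δ (update d p √(δ p))) :
    δ p = d p ^ 2 := by
  refine (hle.eq_or_lt.resolve_right fun hlt => ?_).symm
  exact hmin.not_gt (rangeResidual_update_lt hp hw hr ((Real.lt_sqrt hd).2 hlt))

/-- Edge-based rank-D property (Section IV, Gaussian E-ML relaxation): if a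
tuple satisfying the edge constraints, the anchor constraints and the edge PSD
constraints minimizes the Gaussian ML cost `f_GN` over all such tuples, then at
optimality `δᵢⱼ = dᵢⱼ²` on `E` and `εᵢₖ = eᵢₖ²` on `Ea`. -/
theorem gaussian_eml_rankD_property (D n m : ℕ)
    (E : Finset (Fin n × Fin n)) (Ea : Finset (Fin n × Fin m))
    (a : Fin m → EuclideanSpace ℝ (Fin D))
    (r : Fin n × Fin n → ℝ) (v : Fin n × Fin m → ℝ)
    (σ : Fin n × Fin n → ℝ) (σa : Fin n × Fin m → ℝ)
    (hr : ∀ p ∈ E, 0 < r p) (hv : ∀ q ∈ Ea, 0 < v q)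
    (hσ : ∀ p ∈ E, 0 < σ p) (hσa : ∀ q ∈ Ea, 0 < σa q)
    (X : Matrix (Fin D) (Fin n) ℝ) (Y : Matrix (Fin n) (Fin n) ℝ)
    (δ d : Fin n × Fin n → ℝ) (ε e : Fin n × Fin m → ℝ)
    (hE : EdgeConstraints E Y δ d)
    (hA : AnchorConstraints Ea a X Y ε e)
    (hPSD : EdgePSD E X Y)
    (hmin : ∀ (X' : Matrix (Fin D) (Fin n) ℝ) (Y' : Matrix (Fin n) (Fin n) ℝ)
      (δ' d' : Fin n × Fin n → ℝ) (ε' e' : Fin n × Fin m → ℝ),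
      EdgeConstraints E Y' δ' d' → AnchorConstraints Ea a X' Y' ε' e' →
      EdgePSD E X' Y' →
      fGN E Ea r v σ σa δ d ε e ≤ fGN E Ea r v σ σa δ' d' ε' e') :
    (∀ p ∈ E, δ p = d p ^ 2) ∧ ∀ q ∈ Ea, ε q = e q ^ 2 := by
  simp only [fGN_eq_rangeResidual_add] at hmin
  constructor
  · intro p hp
    obtain ⟨-, -, hd, hle⟩ := hE p hp
    have hmin_p := (add_le_add_iff_right _).1 (hmin X Y δ _ ε e (hE.update_sqrt p) hA hPSD)
    exact eq_sq_of_rangeResidual_le_update hp (pow_pos (inv_pos.2 (hσ p hp)) 2) (hr p hp) hd hle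
      hmin_p
  · intro q hq
    obtain ⟨-, -, he, hle⟩ := hA q hq
    have hmin_q := (add_le_add_iff_left _).1 (hmin X Y δ d ε _ hE (hA.update_sqrt q) hPSD)
    exact eq_sq_of_rangeResidual_le_update hq (pow_pos (inv_pos.2 (hσa q hq)) 2) (hv q hq) he
      hle hmin_q
end

section
/- Feasibility of the exact lift in the relaxation (the relaxation (5) lower-bounds the ML problem (3)). For every X : Matrix (Fin D) (Fin n) ℝ, the tuple (X, Xᵀ * X, δ, d, ε, e) defined by d(i,j) = ‖x_i − x_j‖, δ(i,j) = ‖x_i − x_j‖^2 for (i,j) ∈ E and e(i,k) = ‖x_i − a k‖, ε(i,k) = ‖x_i − a k‖^2 for (i,k) ∈ Ea satisfies the edge constraints, the anchor constraints, the global PSD constraint, and (Xᵀ * X).PosSemidef. -/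
open Matrix
open scoped RealInnerProductSpace

/-- The Schur complement of the identity block is `Bᴴ * B - Bᴴ * 1⁻¹ * B = 0`. -/
theorem Matrix.PosSemidef.fromBlocks_one_conjTranspose_mul_self {m n R : Type*}
    [Fintype m] [Finite n] [DecidableEq m] [CommRing R] [PartialOrder R] [StarRing R]
    [StarOrderedRing R] [NoZeroDivisors R] (B : Matrix m n R) :
    (fromBlocks 1 B Bᴴ (Bᴴ * B)).PosSemidef := by
  let : Invertible (1 : Matrix m m R) := invertibleOne
  rw [PosDef.fromBlocks₁₁ B _ PosDef.one, inv_one, Matrix.mul_one, sub_self]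
  exact PosSemidef.zero

lemma transpose_mul_self_apply_eq_inner_col {D n : ℕ} (X : Matrix (Fin D) (Fin n) ℝ)
    (i j : Fin n) : (Xᵀ * X) i j = ⟪_root_.col X i, _root_.col X j⟫ := by
  simp only [Matrix.mul_apply, transpose_apply, _root_.col, PiLp.inner_apply, RCLike.inner_apply,
    Real.ringHom_apply, mul_comm]

lemma transpose_mul_self_edge_eq_norm_sub_sq {D n : ℕ} (X : Matrix (Fin D) (Fin n) ℝ)
    (i j : Fin n) :
    (Xᵀ * X) i i + (Xᵀ * X) j j - 2 * (Xᵀ * X) i j = ‖_root_.col X i - _root_.col X j‖ ^ 2 := by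
  simp only [transpose_mul_self_apply_eq_inner_col, real_inner_self_eq_norm_sq, norm_sub_sq_real]
  ring

lemma transpose_mul_self_anchor_eq_norm_sub_sq {D n : ℕ} (X : Matrix (Fin D) (Fin n) ℝ)
    (i : Fin n) (b : EuclideanSpace ℝ (Fin D)) :
    (Xᵀ * X) i i - 2 * ⟪_root_.col X i, b⟫ + ‖b‖ ^ 2 = ‖_root_.col X i - b‖ ^ 2 := by
  rw [transpose_mul_self_apply_eq_inner_col, real_inner_self_eq_norm_sq, norm_sub_sq_real]

lemma edgeConstraints_transpose_mul_self {D n : ℕ} (E : Finset (Fin n × Fin n))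
    (X : Matrix (Fin D) (Fin n) ℝ) :
    EdgeConstraints E (Xᵀ * X) (fun p => ‖_root_.col X p.1 - _root_.col X p.2‖ ^ 2)
      (fun p => ‖_root_.col X p.1 - _root_.col X p.2‖) := fun p _ =>
  ⟨transpose_mul_self_edge_eq_norm_sub_sq X p.1 p.2, sq_nonneg _, norm_nonneg _, le_rfl⟩

lemma anchorConstraints_transpose_mul_self {D n m : ℕ} (Ea : Finset (Fin n × Fin m))
    (a : Fin m → EuclideanSpace ℝ (Fin D)) (X : Matrix (Fin D) (Fin n) ℝ) :
    AnchorConstraints Ea a X (Xᵀ * X) (fun q => ‖_root_.col X q.1 - a q.2‖ ^ 2)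
      (fun q => ‖_root_.col X q.1 - a q.2‖) := fun q _ =>
  ⟨transpose_mul_self_anchor_eq_norm_sub_sq X q.1 (a q.2), sq_nonneg _, norm_nonneg _, le_rfl⟩

/-- Feasibility of the exact lift in the relaxation (5): for every `X`, the
tuple `(X, XᵀX, δ, d, ε, e)` with `d, δ` (resp. `e, ε`) the true inter-sensor
(resp. sensor-anchor) distances and squared distances satisfies the edge
constraints, the anchor constraints, the global PSD constraint, and
`(XᵀX) ⪰ 0`; hence the relaxation lower-bounds the ML problem (3). -/
theorem exact_lift_feasible (D n m : ℕ)
    (E : Finset (Fin n × Fin n)) (Ea : Finset (Fin n × Fin m))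
    (a : Fin m → EuclideanSpace ℝ (Fin D))
    (X : Matrix (Fin D) (Fin n) ℝ) :
    EdgeConstraints E (Xᵀ * X)
      (fun p => ‖_root_.col X p.1 - _root_.col X p.2‖ ^ 2) (fun p => ‖_root_.col X p.1 - _root_.col X p.2‖) ∧
    AnchorConstraints Ea a X (Xᵀ * X)
      (fun q => ‖_root_.col X q.1 - a q.2‖ ^ 2) (fun q => ‖_root_.col X q.1 - a q.2‖) ∧
    (Matrix.fromBlocks (1 : Matrix (Fin D) (Fin D) ℝ) X Xᵀ (Xᵀ * X)).PosSemidef ∧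
    (Xᵀ * X).PosSemidef := by
  have hconj : Xᴴ = Xᵀ := conjTranspose_eq_transpose_of_trivial X
  refine ⟨edgeConstraints_transpose_mul_self E X, anchorConstraints_transpose_mul_self Ea a X,
    ?_, ?_⟩
  · simpa only [hconj] using PosSemidef.fromBlocks_one_conjTranspose_mul_self X
  · simpa only [hconj] using posSemidef_conjTranspose_mul_self X
end

section
/- Marginals of log-concave functions over a convex set are log-concave (Prékopa). Let f : ℝ × ℝ → ℝ≥0∞ be measurable and log-concave, i.e. for all a b : ℝ × ℝ and t ∈ Set.Icc (0:ℝ) 1, f(t • a + (1−t) • b) ≥ f(a)^t * f(b)^(1−t). Let Q ⊆ ℝ be a convex measurable set. Then the function g : ℝ → ℝ≥0∞ defined by g(d) = ∫⁻_{r ∈ Q} f(d, r) dr (lower Lebesgue integral) is log-concave: for all d₁ d₂ : ℝ and t ∈ Set.Icc (0:ℝ) 1, g(t·d₁ + (1−t)·d₂) ≥ g(d₁)^t * g(d₂)^(1−t). -/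
/-!
One-dimensional Prékopa–Leindler, applied to the slices `r ↦ 𝟙_Q(r) f(d, r)`; convexity of `Q`
makes these slices satisfy its hypothesis.

Brunn–Minkowski on the line, `|A| + |B| ≤ |A + B|`, gives
`t |{g₁ > s}| + (1 - t) |{g₂ > s}| ≤ |{h > s}|` whenever both superlevel sets are nonempty.
If `g₁` and `g₂` have the same supremum this holds at every level, and the layer cake formula
integrates it to `t ∫ g₁ + (1 - t) ∫ g₂ ≤ ∫ h`. Rescaling `g₂` to match suprema and weighted
AM–GM give `(∫ g₁)^t (∫ g₂)^(1-t) ≤ ∫ h` for bounded functions, and truncation with monotone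
convergence removes the boundedness.
-/

open MeasureTheory Set
open scoped ENNReal Pointwise

namespace ENNReal

theorem geom_mean_le_arith_mean2_weighted (a b : ℝ≥0∞) {t : ℝ} (ht₀ : 0 < t) (ht₁ : t < 1) :
    a ^ t * b ^ (1 - t) ≤ ENNReal.ofReal t * a + ENNReal.ofReal (1 - t) * b := by
  have ht₁' : 0 < 1 - t := sub_pos.2 ht₁
  calc a ^ t * b ^ (1 - t)
      ≤ (a ^ t) ^ t⁻¹ / ENNReal.ofReal t⁻¹ + (b ^ (1 - t)) ^ (1 - t)⁻¹ / ENNReal.ofReal (1 - t)⁻¹ :=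
        young_inequality _ _ (Real.HolderConjugate.inv_one_sub_inv ht₀ ht₁)
    _ = ENNReal.ofReal t * a + ENNReal.ofReal (1 - t) * b := by
        rw [← rpow_mul, ← rpow_mul, mul_inv_cancel₀ ht₀.ne', mul_inv_cancel₀ ht₁'.ne',
          rpow_one, rpow_one, ofReal_inv_of_pos ht₀, ofReal_inv_of_pos ht₁', div_eq_mul_inv,
          div_eq_mul_inv, inv_inv, inv_inv, mul_comm a, mul_comm b]

theorem min_le_rpow_mul_rpow (a b : ℝ≥0∞) {t : ℝ} (ht₀ : 0 ≤ t) (ht₁ : t ≤ 1) :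
    min a b ≤ a ^ t * b ^ (1 - t) :=
  calc min a b = min a b ^ t * min a b ^ (1 - t) := by
        rw [← rpow_add_of_nonneg _ _ ht₀ (sub_nonneg.2 ht₁), add_sub_cancel, rpow_one]
    _ ≤ a ^ t * b ^ (1 - t) := by gcongr <;> simp

theorem iSup_rpow_mul_iSup_rpow_le {a b : ℕ → ℝ≥0∞} (ha : Monotone a) (hb : Monotone b)
    {s t : ℝ} (hs : 0 < s) (ht : 0 < t) {c : ℝ≥0∞} (h : ∀ n, a n ^ s * b n ^ t ≤ c) :
    (⨆ n, a n) ^ s * (⨆ n, b n) ^ t ≤ c := by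
  have ha' := (orderIsoRpow s hs).map_iSup a
  have hb' := (orderIsoRpow t ht).map_iSup b
  simp only [orderIsoRpow_apply] at ha' hb'
  rw [ha', hb', iSup_mul]
  refine iSup_le fun m => ?_
  rw [mul_iSup]
  refine iSup_le fun n => ?_
  calc a m ^ s * b n ^ t ≤ a (max m n) ^ s * b (max m n) ^ t := by
        gcongr
        · exact ha (le_max_left m n)
        · exact hb (le_max_right m n)
    _ ≤ c := h _

end ENNReal

theorem iSup_lintegral_min_natCast {α : Type*} [MeasurableSpace α] (μ : Measure α)
    {g : α → ℝ≥0∞} (hg : Measurable g) :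
    ⨆ n : ℕ, ∫⁻ x, min (g x) n ∂μ = ∫⁻ x, g x ∂μ := by
  rw [← lintegral_iSup (fun n => hg.min measurable_const)
    fun m n hmn x => min_le_min_left _ (Nat.cast_le.2 hmn)]
  simp only [← inf_iSup_eq, ENNReal.iSup_natCast, inf_top_eq]

theorem Real.volume_restrict_Ioi_setOf_ofReal_lt (a : ℝ≥0∞) :
    volume.restrict (Ioi 0) {s : ℝ | ENNReal.ofReal s < a} = a := by
  rcases eq_or_ne a ∞ with rfl | ha
  · simp
  · have : {s : ℝ | ENNReal.ofReal s < a} ∩ Ioi 0 = Ioo 0 a.toReal := by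
      ext s
      rw [mem_inter_iff, mem_Ioi, mem_Ioo, and_comm]
      exact and_congr_right fun hs => ENNReal.ofReal_lt_iff_lt_toReal hs.le ha
    rw [Measure.restrict_apply' measurableSet_Ioi, this, Real.volume_Ioo, sub_zero,
      ENNReal.ofReal_toReal ha]

theorem lintegral_eq_lintegral_meas_ofReal_lt {α : Type*} [MeasurableSpace α] (μ : Measure α)
    [SFinite μ] {g : α → ℝ≥0∞} (hg : Measurable g) :
    ∫⁻ x, g x ∂μ = ∫⁻ s in Ioi 0, μ {x | ENNReal.ofReal s < g x} := by
  have hE : MeasurableSet {p : α × ℝ | ENNReal.ofReal p.2 < g p.1} :=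
    measurableSet_lt (ENNReal.measurable_ofReal.comp measurable_snd) (hg.comp measurable_fst)
  calc ∫⁻ x, g x ∂μ = ∫⁻ x, volume.restrict (Ioi 0) {s : ℝ | ENNReal.ofReal s < g x} ∂μ := by
        simp only [Real.volume_restrict_Ioi_setOf_ofReal_lt]
    _ = μ.prod (volume.restrict (Ioi 0)) {p : α × ℝ | ENNReal.ofReal p.2 < g p.1} :=
        (Measure.prod_apply hE).symm
    _ = ∫⁻ s in Ioi 0, μ {x | ENNReal.ofReal s < g x} := Measure.prod_apply_symm hE

namespace Real

theorem volume_add_volume_le_volume_add_of_isCompact {K L : Set ℝ} (hK : IsCompact K)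
    (hL : IsCompact L) (hK₀ : K.Nonempty) (hL₀ : L.Nonempty) :
    volume K + volume L ≤ volume (K + L) := by
  set a := sSup K
  set b := sInf L
  have haK : a ∈ K := hK.sSup_mem hK₀
  have hbL : b ∈ L := hL.sInf_mem hL₀
  have hX : (· + b) '' K ⊆ K + L := image_subset_iff.2 fun x hx => add_mem_add hx hbL
  have hY : (a + ·) '' L ⊆ K + L := image_subset_iff.2 fun y hy => add_mem_add haK hy
  have hXY : (· + b) '' K ∩ (a + ·) '' L ⊆ {a + b} := by
    rintro _ ⟨⟨x, hx, rfl⟩, y, hy, hxy⟩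
    have : x ≤ a := le_csSup hK.bddAbove hx
    have : b ≤ y := csInf_le hL.bddBelow hy
    simp only [mem_singleton_iff]
    linarith
  calc volume K + volume L = volume ((· + b) '' K) + volume ((a + ·) '' L) := by
        rw [image_add_right, measure_preimage_add_right, image_add_left, measure_preimage_add]
    _ = volume ((· + b) '' K ∪ (a + ·) '' L) := by
        rw [← measure_union_add_inter _ (hL.image (continuous_const_add a)).measurableSet,
          measure_mono_null hXY (measure_singleton _), add_zero]
    _ ≤ volume (K + L) := measure_mono (union_subset hX hY)

theorem volume_add_volume_le_volume_add {A B : Set ℝ} (hA : MeasurableSet A)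
    (hB : MeasurableSet B) (hA₀ : A.Nonempty) (hB₀ : B.Nonempty) :
    volume A + volume B ≤ volume (A + B) := by
  obtain ⟨a, ha⟩ := hA₀
  obtain ⟨b, hb⟩ := hB₀
  rw [hA.measure_eq_iSup_isCompact, hB.measure_eq_iSup_isCompact]
  simp only [iSup_and']
  refine ENNReal.biSup_add_biSup_le' ⟨∅, empty_subset _, isCompact_empty⟩
    ⟨∅, empty_subset _, isCompact_empty⟩ fun K ⟨hKA, hK⟩ L ⟨hLB, hL⟩ => ?_
  calc volume K + volume L ≤ volume (insert a K) + volume (insert b L) := by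
        gcongr <;> exact subset_insert _ _
    _ ≤ volume (insert a K + insert b L) :=
        volume_add_volume_le_volume_add_of_isCompact (hK.insert a) (hL.insert b)
          (insert_nonempty a K) (insert_nonempty b L)
    _ ≤ volume (A + B) :=
        measure_mono (add_subset_add (insert_subset ha hKA) (insert_subset hb hLB))

theorem ofReal_mul_volume_add_ofReal_mul_volume_le {A B : Set ℝ} (hA : MeasurableSet A)
    (hB : MeasurableSet B) (hA₀ : A.Nonempty) (hB₀ : B.Nonempty) {s t : ℝ} (hs : 0 ≤ s)
    (ht : 0 ≤ t) :
    ENNReal.ofReal s * volume A + ENNReal.ofReal t * volume B ≤ volume (s • A + t • B) := by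
  have := volume_add_volume_le_volume_add (hA.const_smul₀ s) (hB.const_smul₀ t)
    hA₀.smul_set hB₀.smul_set
  simpa [Measure.addHaar_smul, abs_of_nonneg hs, abs_of_nonneg ht] using this

variable {g₁ g₂ h : ℝ → ℝ≥0∞} {t : ℝ}

theorem lintegral_prekopaLeindler_add_of_iSup_eq (hg₁ : Measurable g₁) (hg₂ : Measurable g₂)
    (hh : Measurable h) (ht₀ : 0 ≤ t) (ht₁ : t ≤ 1) (hsup : ⨆ x, g₁ x = ⨆ x, g₂ x)
    (H : ∀ x y, g₁ x ^ t * g₂ y ^ (1 - t) ≤ h (t * x + (1 - t) * y)) :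
    ENNReal.ofReal t * (∫⁻ x, g₁ x) + ENNReal.ofReal (1 - t) * ∫⁻ x, g₂ x ≤ ∫⁻ x, h x := by
  have levels : ∀ s : ℝ, ENNReal.ofReal t * volume {x | ENNReal.ofReal s < g₁ x} +
      ENNReal.ofReal (1 - t) * volume {x | ENNReal.ofReal s < g₂ x} ≤
        volume {x | ENNReal.ofReal s < h x} := by
    intro s
    by_cases hs : ENNReal.ofReal s < ⨆ x, g₁ x
    · have hne₁ : {x | ENNReal.ofReal s < g₁ x}.Nonempty := lt_iSup_iff.1 hs
      have hne₂ : {x | ENNReal.ofReal s < g₂ x}.Nonempty := lt_iSup_iff.1 (hs.trans_eq hsup)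
      refine (ofReal_mul_volume_add_ofReal_mul_volume_le (measurableSet_lt measurable_const hg₁)
        (measurableSet_lt measurable_const hg₂) hne₁ hne₂ ht₀ (sub_nonneg.2 ht₁)).trans
        (measure_mono ?_)
      rintro _ ⟨_, ⟨x, hx, rfl⟩, _, ⟨y, hy, rfl⟩, rfl⟩
      calc ENNReal.ofReal s < min (g₁ x) (g₂ y) := lt_min hx hy
        _ ≤ g₁ x ^ t * g₂ y ^ (1 - t) := ENNReal.min_le_rpow_mul_rpow _ _ ht₀ ht₁
        _ ≤ h (t * x + (1 - t) * y) := H x y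
    · have empty : ∀ g : ℝ → ℝ≥0∞, ⨆ x, g x ≤ ENNReal.ofReal s →
          {x | ENNReal.ofReal s < g x} = ∅ := fun g hg =>
        eq_empty_of_forall_notMem fun x hx => (le_iSup_of_le x le_rfl).trans hg |>.not_gt hx
      rw [not_lt] at hs
      rw [empty g₁ hs, empty g₂ (hsup.symm.trans_le hs)]
      simp
  calc ENNReal.ofReal t * (∫⁻ x, g₁ x) + ENNReal.ofReal (1 - t) * ∫⁻ x, g₂ x
      = (∫⁻ s in Ioi 0, ENNReal.ofReal t * volume {x | ENNReal.ofReal s < g₁ x}) +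
          ∫⁻ s in Ioi 0, ENNReal.ofReal (1 - t) * volume {x | ENNReal.ofReal s < g₂ x} := by
        rw [lintegral_eq_lintegral_meas_ofReal_lt volume hg₁,
          lintegral_eq_lintegral_meas_ofReal_lt volume hg₂,
          lintegral_const_mul' _ _ ENNReal.ofReal_ne_top,
          lintegral_const_mul' _ _ ENNReal.ofReal_ne_top]
    _ ≤ ∫⁻ s in Ioi 0, volume {x | ENNReal.ofReal s < h x} :=
        le_lintegral_add _ _ |>.trans (lintegral_mono levels)
    _ = ∫⁻ x, h x := (lintegral_eq_lintegral_meas_ofReal_lt volume hh).symm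

theorem lintegral_prekopaLeindler_of_iSup_ne_top (hg₁ : Measurable g₁) (hg₂ : Measurable g₂)
    (hh : Measurable h) (ht₀ : 0 < t) (ht₁ : t < 1) (hM₁ : ⨆ x, g₁ x ≠ ∞)
    (hM₂ : ⨆ x, g₂ x ≠ ∞) (H : ∀ x y, g₁ x ^ t * g₂ y ^ (1 - t) ≤ h (t * x + (1 - t) * y)) :
    (∫⁻ x, g₁ x) ^ t * (∫⁻ x, g₂ x) ^ (1 - t) ≤ ∫⁻ x, h x := by
  have ht₁' : 0 < 1 - t := sub_pos.2 ht₁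
  have lintegral_eq_zero : ∀ g : ℝ → ℝ≥0∞, ⨆ x, g x = 0 → ∫⁻ x, g x = 0 := fun g hg => by
    simp [ENNReal.iSup_eq_zero.1 hg]
  rcases eq_or_ne (⨆ x, g₁ x) 0 with hM₁₀ | hM₁₀
  · simp [lintegral_eq_zero g₁ hM₁₀, ENNReal.zero_rpow_of_pos ht₀]
  rcases eq_or_ne (⨆ x, g₂ x) 0 with hM₂₀ | hM₂₀
  · simp [lintegral_eq_zero g₂ hM₂₀, ENNReal.zero_rpow_of_pos ht₁']
  -- Rescaling `g₂` by `c` and `h` by `c ^ (1 - t)` keeps `H` and equalises the suprema.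
  set c := (⨆ x, g₁ x) / ⨆ x, g₂ x
  have hc₀ : c ^ (1 - t) ≠ 0 :=
    (ENNReal.rpow_pos (ENNReal.div_pos hM₁₀ hM₂) (ENNReal.div_ne_top hM₁ hM₂₀)).ne'
  have hc : c ^ (1 - t) ≠ ∞ := ENNReal.rpow_ne_top_of_nonneg ht₁'.le (ENNReal.div_ne_top hM₁ hM₂₀)
  have hsup : ⨆ x, g₁ x = ⨆ x, c * g₂ x := by
    rw [← ENNReal.mul_iSup, ENNReal.div_mul_cancel hM₂₀ hM₂]
  have H' : ∀ x y, g₁ x ^ t * (c * g₂ y) ^ (1 - t) ≤ c ^ (1 - t) * h (t * x + (1 - t) * y) := by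
    intro x y
    rw [ENNReal.mul_rpow_of_nonneg _ _ ht₁'.le, mul_left_comm]
    gcongr
    exact H x y
  refine (ENNReal.mul_le_mul_iff_right hc₀ hc).1 ?_
  calc c ^ (1 - t) * ((∫⁻ x, g₁ x) ^ t * (∫⁻ x, g₂ x) ^ (1 - t))
      = (∫⁻ x, g₁ x) ^ t * (c * ∫⁻ x, g₂ x) ^ (1 - t) := by
        rw [ENNReal.mul_rpow_of_nonneg _ _ ht₁'.le, mul_left_comm]
    _ ≤ ENNReal.ofReal t * (∫⁻ x, g₁ x) + ENNReal.ofReal (1 - t) * (c * ∫⁻ x, g₂ x) :=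
        ENNReal.geom_mean_le_arith_mean2_weighted _ _ ht₀ ht₁
    _ = ENNReal.ofReal t * (∫⁻ x, g₁ x) + ENNReal.ofReal (1 - t) * ∫⁻ x, c * g₂ x := by
        rw [lintegral_const_mul _ hg₂]
    _ ≤ ∫⁻ x, c ^ (1 - t) * h x :=
        lintegral_prekopaLeindler_add_of_iSup_eq hg₁ (hg₂.const_mul c) (hh.const_mul _) ht₀.le
          ht₁.le hsup H'
    _ = c ^ (1 - t) * ∫⁻ x, h x := lintegral_const_mul _ hh

theorem lintegral_prekopaLeindler (hg₁ : Measurable g₁) (hg₂ : Measurable g₂)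
    (hh : Measurable h) (ht₀ : 0 < t) (ht₁ : t < 1)
    (H : ∀ x y, g₁ x ^ t * g₂ y ^ (1 - t) ≤ h (t * x + (1 - t) * y)) :
    (∫⁻ x, g₁ x) ^ t * (∫⁻ x, g₂ x) ^ (1 - t) ≤ ∫⁻ x, h x := by
  have mono : ∀ g : ℝ → ℝ≥0∞, Monotone fun n : ℕ => ∫⁻ x, min (g x) n :=
    fun g m n hmn => lintegral_mono fun x => min_le_min_left _ (Nat.cast_le.2 hmn)
  have bdd : ∀ (g : ℝ → ℝ≥0∞) (n : ℕ), ⨆ x, min (g x) n ≠ ∞ := fun g n =>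
    ne_top_of_le_ne_top (ENNReal.natCast_ne_top n) (iSup_le fun x => min_le_right _ _)
  rw [← iSup_lintegral_min_natCast volume hg₁, ← iSup_lintegral_min_natCast volume hg₂]
  refine ENNReal.iSup_rpow_mul_iSup_rpow_le (mono g₁) (mono g₂) ht₀ (sub_pos.2 ht₁) fun n => ?_
  refine lintegral_prekopaLeindler_of_iSup_ne_top (hg₁.min measurable_const)
    (hg₂.min measurable_const) hh ht₀ ht₁ (bdd g₁ n) (bdd g₂ n) fun x y => (H x y).trans' ?_
  gcongr <;> exact min_le_left _ _

end Real

/-- Prékopa-type fact invoked in Example 2: the marginal (lower Lebesgue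
integral over a convex measurable set `Q`) of a jointly log-concave function is
log-concave. -/
theorem marginal_logConcave (f : ℝ × ℝ → ℝ≥0∞) (hf : Measurable f)
    (hlc : ∀ a b : ℝ × ℝ, ∀ t ∈ Set.Icc (0 : ℝ) 1,
      f a ^ t * f b ^ (1 - t) ≤ f (t • a + (1 - t) • b))
    (Q : Set ℝ) (hQconv : Convex ℝ Q) (hQm : MeasurableSet Q) :
    ∀ d₁ d₂ : ℝ, ∀ t ∈ Set.Icc (0 : ℝ) 1,
      (∫⁻ r in Q, f (d₁, r)) ^ t * (∫⁻ r in Q, f (d₂, r)) ^ (1 - t) ≤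
        ∫⁻ r in Q, f (t * d₁ + (1 - t) * d₂, r) := by
  rintro d₁ d₂ t ⟨ht₀, ht₁⟩
  rcases ht₀.eq_or_lt with rfl | ht₀
  · simp
  rcases ht₁.eq_or_lt with rfl | ht₁
  · simp
  have slice : ∀ d, Measurable (Q.indicator fun r => f (d, r)) :=
    fun d => (hf.comp measurable_prodMk_left).indicator hQm
  simp only [← lintegral_indicator hQm]
  refine Real.lintegral_prekopaLeindler (slice d₁) (slice d₂) (slice _) ht₀ ht₁ fun x y => ?_
  by_cases hx : x ∈ Q
  · by_cases hy : y ∈ Q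
    · have hxy : t * x + (1 - t) * y ∈ Q := hQconv hx hy ht₀.le (sub_nonneg.2 ht₁.le) (by ring)
      simpa [hx, hy, hxy] using hlc (d₁, x) (d₂, y) t ⟨ht₀.le, ht₁.le⟩
    · simp [hy, ENNReal.zero_rpow_of_pos (sub_pos.2 ht₁)]
  · simp [hx, ENNReal.zero_rpow_of_pos ht₀]
end
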